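/- Let {x₁,…,xₙ} ⊆ [0,1]^p, λ > 0, θ with i.i.d. Exponential(λ) coordinates, Y uniform on [0,1]^p independent of θ, and γ_θ(x,y) = exp(−Σ_l θ_l(x_l−y_l)²). Then the criterion −(2/n)Σᵢ E[γ_θ(xᵢ,Y)] + (1/n²)ΣᵢΣⱼ E[γ_θ(xᵢ,xⱼ)] equals (2λ^p/n²)·[ MaxPro(D;λ) − (n/λ^{p/2}) Σᵢ ∏_l φ(x_{i,l};λ) + n/(2λ^p) ], where MaxPro(D;λ) = Σ_{i<j} 1/∏_l((x_{i,l}−x_{j,l})² + λ) and φ(x;λ) = arctan(x/√λ) + arctan((1−x)/√λ). -/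

import Mathlib

open MeasureTheory

/-- The anisotropic Gaussian kernel `γ_θ(x,y) = exp(−Σ_l θ_l (x_l − y_l)²)`. -/
noncomputable def gammaKer {p : ℕ} (θ x y : Fin p → ℝ) : ℝ :=
  Real.exp (-∑ l, θ l * (x l - y l) ^ 2)

/-- The i.i.d. `Exponential(λ)` prior density `Π_l λ e^{−λ θ_l}`. -/
noncomputable def expDens {p : ℕ} (lam : ℝ) (θ : Fin p → ℝ) : ℝ :=
  ∏ l, lam * Real.exp (-lam * θ l)

/-- The boundary-correction term `φ(x;λ) = arctan(x/√λ) + arctan((1−x)/√λ)`. -/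
noncomputable def phiCorr (lam t : ℝ) : ℝ :=
  Real.arctan (t / Real.sqrt lam) + Real.arctan ((1 - t) / Real.sqrt lam)

/-- The MaxPro criterion `MaxPro(D;λ) = Σ_{i<j} 1 / Π_l ((x_{i,l}−x_{j,l})² + λ)`. -/
noncomputable def maxPro {n p : ℕ} (lam : ℝ) (x : Fin n → Fin p → ℝ) : ℝ :=
  ∑ i : Fin n, ∑ j ∈ Finset.univ.filter (fun j => i < j),
    1 / ∏ l, ((x i l - x j l) ^ 2 + lam)

/-! Kernel and prior both factor over coordinates, so each expectation is a product of
one-dimensional integrals. In one coordinate, integrating `e^{-θ d}` against the exponential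
density is a Laplace transform, `λ / (d + λ)`; integrating `λ / ((x - t)² + λ)` over `t ∈ [0,1]`
(after swapping the `θ` and `t` integrals) gives `√λ φ(x;λ)`. In the double sum the symmetric
off-diagonal terms give `2 λ^p MaxPro(D;λ)` and the `n` diagonal terms are `1`. -/

open Set Real

theorem setIntegral_univ_pi_prod {ι 𝕜 : Type*} [Fintype ι] [RCLike 𝕜] {E : ι → Type*}
    [∀ i, MeasureSpace (E i)] [∀ i, SigmaFinite (volume : Measure (E i))]
    (s : ∀ i, Set (E i)) (f : ∀ i, E i → 𝕜) :
    ∫ x in univ.pi s, ∏ i, f i (x i) = ∏ i, ∫ t in s i, f i t := by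
  rw [volume_pi, Measure.restrict_pi_pi, integral_fintype_prod_eq_prod]

theorem integral_Ioi_exp_neg_mul {c : ℝ} (hc : 0 < c) :
    ∫ s in Ioi (0 : ℝ), exp (-(c * s)) = c⁻¹ := by
  simpa [neg_mul, div_neg, neg_div, one_div] using integral_exp_mul_Ioi (neg_neg_of_pos hc) 0

theorem integral_Ioi_exp_neg_mul_mul_exponential {lam : ℝ} (hlam : 0 < lam) {d : ℝ}
    (hd : 0 ≤ d) :
    ∫ s in Ioi (0 : ℝ), exp (-(s * d)) * (lam * exp (-lam * s)) = lam / (d + lam) := by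
  have hexp : ∀ s, exp (-(s * d)) * (lam * exp (-lam * s)) = lam * exp (-((d + lam) * s)) := by
    intro s
    rw [mul_left_comm, ← exp_add]
    ring_nf
  simp_rw [hexp]
  rw [integral_const_mul, integral_Ioi_exp_neg_mul (by positivity), div_eq_mul_inv]

theorem Finset.sum_sum_eq_two_mul_sum_lt_add_sum_diag {ι R : Type*} [Fintype ι] [LinearOrder ι]
    [NonAssocSemiring R] (F : ι → ι → R) (hF : ∀ i j, F i j = F j i) :
    ∑ i, ∑ j, F i j = 2 * ∑ i, ∑ j with i < j, F i j + ∑ i, F i i := by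
  have htri : ∑ i, ∑ j, F i j = ∑ i, ∑ j, ((if i < j then F i j else 0)
      + (if j < i then F j i else 0) + (if i = j then F i j else 0)) := by
    refine Finset.sum_congr rfl fun i _ => Finset.sum_congr rfl fun j _ => ?_
    rcases lt_trichotomy i j with h | rfl | h
    · simp [h, h.not_gt, h.ne]
    · simp
    · simp [h, h.not_gt, h.ne', hF i j]
  simp only [htri, Finset.sum_add_distrib, Finset.sum_ite_eq, Finset.mem_univ, if_true]
  rw [Finset.sum_comm (f := fun i j => if j < i then F j i else 0), two_mul]
  simp only [Finset.sum_filter]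

theorem gammaKer_mul_expDens {p : ℕ} (lam : ℝ) (θ a b : Fin p → ℝ) :
    gammaKer θ a b * expDens lam θ
      = ∏ l, exp (-(θ l * (a l - b l) ^ 2)) * (lam * exp (-lam * θ l)) := by
  rw [gammaKer, expDens, ← Finset.sum_neg_distrib, exp_sum, ← Finset.prod_mul_distrib]

theorem integral_gammaKer_mul_expDens {p : ℕ} {lam : ℝ} (hlam : 0 < lam) (a b : Fin p → ℝ) :
    ∫ θ in univ.pi fun _ : Fin p => Ioi (0 : ℝ), gammaKer θ a b * expDens lam θ
      = lam ^ p / ∏ l, ((a l - b l) ^ 2 + lam) := by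
  simp_rw [gammaKer_mul_expDens]
  rw [setIntegral_univ_pi_prod _
    (fun l s => exp (-(s * (a l - b l) ^ 2)) * (lam * exp (-lam * s)))]
  simp_rw [integral_Ioi_exp_neg_mul_mul_exponential hlam (sq_nonneg _)]
  rw [Finset.prod_div_distrib, Finset.prod_const, Finset.card_univ, Fintype.card_fin]

theorem integral_Icc_div_sq_add {lam : ℝ} (hlam : 0 < lam) (c : ℝ) :
    ∫ t in Icc (0 : ℝ) 1, lam / ((c - t) ^ 2 + lam) = √lam * phiCorr lam c := by
  have hs : 0 < √lam := sqrt_pos.2 hlam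
  have hrescale : ∀ t, lam / ((c - t) ^ 2 + lam) = 1 / (1 + ((t - c) / √lam) ^ 2) := by
    intro t
    field_simp
    rw [sq_sqrt hlam.le]
    ring
  rw [integral_Icc_eq_integral_Ioc, ← intervalIntegral.integral_of_le zero_le_one]
  simp_rw [hrescale]
  rw [intervalIntegral.integral_comp_sub_right (fun u => 1 / (1 + (u / √lam) ^ 2)) c,
    intervalIntegral.integral_comp_div (fun v => 1 / (1 + v ^ 2)) hs.ne',
    integral_one_div_one_add_sq, smul_eq_mul, phiCorr, zero_sub, neg_div, arctan_neg]
  ring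

theorem integrable_exp_neg_mul_sq_mul_exponential {lam : ℝ} (hlam : 0 < lam) (c : ℝ) :
    Integrable (Function.uncurry fun s t => exp (-(s * (c - t) ^ 2)) * (lam * exp (-lam * s)))
      ((volume.restrict (Ioi (0 : ℝ))).prod (volume.restrict (Icc (0 : ℝ) 1))) := by
  have hdom : Integrable (fun z : ℝ × ℝ => lam * exp (-lam * z.1))
      ((volume.restrict (Ioi (0 : ℝ))).prod (volume.restrict (Icc (0 : ℝ) 1))) := by
    simpa using ((exp_neg_integrableOn_Ioi 0 hlam).const_mul lam).mul_prod
      (integrable_const (1 : ℝ) (μ := volume.restrict (Icc (0 : ℝ) 1)))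
  refine hdom.mono' (by fun_prop) ?_
  rw [Measure.prod_restrict]
  filter_upwards [ae_restrict_mem (measurableSet_Ioi.prod measurableSet_Icc)]
    with ⟨s, t⟩ hst
  have hs : 0 < s := hst.1
  rw [Function.uncurry_apply_pair, Real.norm_of_nonneg (by positivity)]
  refine mul_le_of_le_one_left (by positivity) ?_
  rw [exp_le_one_iff, neg_nonpos]
  positivity

theorem integral_Ioi_integral_Icc_mul_exponential {lam : ℝ} (hlam : 0 < lam) (c : ℝ) :
    ∫ s in Ioi (0 : ℝ), (∫ t in Icc (0 : ℝ) 1, exp (-(s * (c - t) ^ 2))) * (lam * exp (-lam * s))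
      = √lam * phiCorr lam c := by
  simp_rw [← integral_mul_const]
  rw [integral_integral_swap (integrable_exp_neg_mul_sq_mul_exponential hlam c),
    ← integral_Icc_div_sq_add hlam c]
  exact setIntegral_congr_fun measurableSet_Icc fun t _ =>
    integral_Ioi_exp_neg_mul_mul_exponential hlam (sq_nonneg _)

theorem integral_integral_gammaKer_mul_expDens {p : ℕ} {lam : ℝ} (hlam : 0 < lam)
    (a : Fin p → ℝ) :
    ∫ θ in univ.pi fun _ : Fin p => Ioi (0 : ℝ),
        (∫ y in univ.pi fun _ : Fin p => Icc (0 : ℝ) 1, gammaKer θ a y) * expDens lam θ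
      = √lam ^ p * ∏ l, phiCorr lam (a l) := by
  have hfactor : ∀ θ : Fin p → ℝ,
      (∫ y in univ.pi fun _ : Fin p => Icc (0 : ℝ) 1, gammaKer θ a y) * expDens lam θ
        = ∏ l, (∫ t in Icc (0 : ℝ) 1, exp (-(θ l * (a l - t) ^ 2)))
            * (lam * exp (-lam * θ l)) := by
    intro θ
    simp only [gammaKer, ← Finset.sum_neg_distrib, exp_sum]
    rw [setIntegral_univ_pi_prod _ (fun l t => exp (-(θ l * (a l - t) ^ 2))), expDens,
      ← Finset.prod_mul_distrib]
  simp_rw [hfactor]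
  rw [setIntegral_univ_pi_prod _ (fun l s =>
    (∫ t in Icc (0 : ℝ) 1, exp (-(s * (a l - t) ^ 2))) * (lam * exp (-lam * s)))]
  simp_rw [integral_Ioi_integral_Icc_mul_exponential hlam]
  rw [Finset.prod_mul_distrib, Finset.prod_const, Finset.card_univ, Fintype.card_fin]

theorem psp_criterion_eq_maxpro_adjusted_general (n p : ℕ) (lam : ℝ) (hlam : 0 < lam)
    (x : Fin n → Fin p → ℝ) :
    -(2 / (n : ℝ)) * ∑ i,
        (∫ θ in Set.univ.pi fun _ : Fin p => Set.Ioi (0 : ℝ),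
          ((∫ y in Set.univ.pi fun _ : Fin p => Set.Icc (0 : ℝ) 1, gammaKer θ (x i) y)
            * expDens lam θ))
      + (1 / (n : ℝ) ^ 2) * ∑ i, ∑ j,
        (∫ θ in Set.univ.pi fun _ : Fin p => Set.Ioi (0 : ℝ),
          gammaKer θ (x i) (x j) * expDens lam θ)
    = (2 * lam ^ p / (n : ℝ) ^ 2) *
        (maxPro lam x
          - ((n : ℝ) / Real.sqrt lam ^ p) * ∑ i, ∏ l, phiCorr lam (x i l)
          + (n : ℝ) / (2 * lam ^ p)) := by
  have hdiag : ∑ i, lam ^ p / ∏ l, ((x i l - x i l) ^ 2 + lam) = n := by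
    simp [hlam.ne']
  have hpairs : ∑ i, ∑ j, lam ^ p / ∏ l, ((x i l - x j l) ^ 2 + lam)
      = 2 * lam ^ p * maxPro lam x + n := by
    rw [Finset.sum_sum_eq_two_mul_sum_lt_add_sum_diag _
      fun i j => by simp_rw [← neg_sub (x j _), neg_sq], hdiag, maxPro]
    simp_rw [Finset.mul_sum, mul_one_div, mul_div_assoc]
  have hsqrt : √lam ^ p * √lam ^ p = lam ^ p := by rw [← mul_pow, mul_self_sqrt hlam.le]
  simp_rw [integral_integral_gammaKer_mul_expDens hlam, integral_gammaKer_mul_expDens hlam]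
  rw [← Finset.mul_sum, hpairs, ← hsqrt]
  field_simp
  ring

/-- For a design `{x₁,…,xₙ} ⊆ [0,1]^p`, `θ` with i.i.d. `Exponential(λ)` coordinates and
`Y` uniform on `[0,1]^p` independent of `θ`, the projected-support-point criterion
`−(2/n) Σᵢ E[γ_θ(xᵢ,Y)] + (1/n²) ΣᵢΣⱼ E[γ_θ(xᵢ,xⱼ)]` equals
`(2λ^p/n²) [ MaxPro(D;λ) − (n/λ^{p/2}) Σᵢ Π_l φ(x_{i,l};λ) + n/(2λ^p) ]`. -/
theorem psp_criterion_eq_maxpro_adjusted (n p : ℕ) (hn : 0 < n) (lam : ℝ) (hlam : 0 < lam)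
    (x : Fin n → Fin p → ℝ) (hx : ∀ i l, x i l ∈ Set.Icc (0 : ℝ) 1) :
    -(2 / (n : ℝ)) * ∑ i,
        (∫ θ in Set.univ.pi fun _ : Fin p => Set.Ioi (0 : ℝ),
          ((∫ y in Set.univ.pi fun _ : Fin p => Set.Icc (0 : ℝ) 1, gammaKer θ (x i) y)
            * expDens lam θ))
      + (1 / (n : ℝ) ^ 2) * ∑ i, ∑ j,
        (∫ θ in Set.univ.pi fun _ : Fin p => Set.Ioi (0 : ℝ),
          gammaKer θ (x i) (x j) * expDens lam θ)
    = (2 * lam ^ p / (n : ℝ) ^ 2) *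
        (maxPro lam x
          - ((n : ℝ) / Real.sqrt lam ^ p) * ∑ i, ∏ l, phiCorr lam (x i l)
          + (n : ℝ) / (2 * lam ^ p)) :=
  psp_criterion_eq_maxpro_adjusted_general n p lam hlam x
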